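/- arXiv:1802.01519 — 4 statements merged into one kernel-verified Lean document; each statement's English description precedes it below -/
import Mathlib

section
/- Let T(t) = exp(−Γ₂ t Δ²) denote the semigroup generated by −Γ₂Δ² on FM(ℝⁿ), i.e. (T(t)u₀)^∧ = e^{−Γ₂ t|ξ|⁴} û₀, with Γ₂ > 0. Then for 1 ≤ p ≤ ∞, ‖Δ²T(·)u₀‖_{L^p(ℝ₊, FM(ℝⁿ))} ≤ (Γ₂ p)^{−1/p} ‖u₀‖_{FM^{4−4/p}} for all u₀ ∈ FM^{4−4/p}(ℝⁿ). -/
/-!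
Write `F(t) = ∫ a e^{-Γ t a} dμ` for a symbol `a ≥ 0` (here `a = |ξ|⁴`) and `r = p < ∞`.
Splitting `a = a^{1/r} a^{1-1/r}` makes `F(t)` an integral of `a^{1/r} e^{-Γ t a}` against
`ν = a^{1-1/r} μ`. Hölder for `ν` gives `F(t)^r ≤ ν(univ)^{r-1} ∫ a e^{-Γ r t a} dν`, and after
Tonelli each mode contributes `∫₀^∞ a e^{-Γ r t a} dt ≤ (Γ r)⁻¹`. Hence
`‖F‖_{L^r}^r ≤ (Γ r)⁻¹ ν(univ)^r` with `ν(univ) = ∫ a^{1-1/r} dμ`. For `p = ∞`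
simply `F(t) ≤ ∫ a dμ`.
-/

open MeasureTheory ENNReal Set

theorem lintegral_Ioi_exp_neg_mul {b : ℝ} (hb : 0 < b) :
    ∫⁻ t in Ioi (0 : ℝ), ENNReal.ofReal (Real.exp (-(b * t))) = ENNReal.ofReal b⁻¹ := by
  rw [← ofReal_integral_eq_lintegral_ofReal]
  · have h := integral_comp_mul_left_Ioi (fun x => Real.exp (-x)) 0 hb
    simp only [mul_zero, integral_exp_neg_Ioi, neg_zero, Real.exp_zero, smul_eq_mul,
      mul_one] at h
    rw [h]
  · have h := exp_neg_integrableOn_Ioi 0 hb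
    simp only [neg_mul] at h
    exact h
  · exact .of_forall fun t => (Real.exp_pos _).le

theorem lintegral_Ioi_mul_exp_neg_mul_le {b c : ℝ} (hb : 0 < b) (hc : 0 ≤ c) :
    ∫⁻ t in Ioi (0 : ℝ), ENNReal.ofReal (c * Real.exp (-b * t * c)) ≤ ENNReal.ofReal b⁻¹ := by
  rcases hc.eq_or_lt with rfl | hc
  · simp
  refine le_of_eq ?_
  calc ∫⁻ t in Ioi (0 : ℝ), ENNReal.ofReal (c * Real.exp (-b * t * c))
      = ENNReal.ofReal c * ∫⁻ t in Ioi (0 : ℝ), ENNReal.ofReal (Real.exp (-(b * c * t))) := by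
        rw [← lintegral_const_mul' _ _ ofReal_ne_top]
        refine lintegral_congr fun t => ?_
        rw [← ENNReal.ofReal_mul hc.le]
        ring_nf
    _ = ENNReal.ofReal b⁻¹ := by
        rw [lintegral_Ioi_exp_neg_mul (by positivity), ← ENNReal.ofReal_mul hc.le]
        field_simp

theorem ENNReal.toReal_inv_le_one {p : ℝ≥0∞} (hp : 1 ≤ p) : p.toReal⁻¹ ≤ 1 := by
  rw [← ENNReal.toReal_inv]
  exact ENNReal.toReal_le_of_le_ofReal zero_le_one (by simpa using ENNReal.inv_le_one.2 hp)

variable {X : Type*} [MeasurableSpace X]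

theorem MeasureTheory.Integrable.rpow_of_le_one {μ : Measure X} [IsFiniteMeasure μ] {a : X → ℝ}
    (ha : Integrable a μ) (ha0 : 0 ≤ a) {s : ℝ} (hs0 : 0 ≤ s) (hs1 : s ≤ 1) :
    Integrable (fun x => a x ^ s) μ := by
  refine (ha.add (integrable_const 1)).mono (ha.aemeasurable.pow_const s).aestronglyMeasurable
    (.of_forall fun x => ?_)
  have hx0 : 0 ≤ a x := ha0 x
  rw [Pi.add_apply, Real.norm_of_nonneg (Real.rpow_nonneg hx0 s),
    Real.norm_of_nonneg (add_nonneg hx0 zero_le_one)]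
  rcases le_total (a x) 1 with hx | hx
  · linarith [Real.rpow_le_one hx0 hx hs0]
  · have := Real.rpow_le_rpow_of_exponent_le hx hs1
    rw [Real.rpow_one] at this
    linarith

theorem lintegral_rpow_le_measure_univ_rpow_mul {ν : Measure X} {f : X → ℝ≥0∞}
    (hf : AEMeasurable f ν) {r : ℝ} (hr : 1 ≤ r) :
    (∫⁻ x, f x ∂ν) ^ r ≤ ν univ ^ (r - 1) * ∫⁻ x, f x ^ r ∂ν := by
  have h := eLpNorm'_le_eLpNorm'_mul_rpow_measure_univ one_pos hr hf.aestronglyMeasurable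
  simp only [eLpNorm', enorm_eq_self, ENNReal.rpow_one, div_one] at h
  have hr0 : 0 < r := one_pos.trans_le hr
  calc (∫⁻ x, f x ∂ν) ^ r
      ≤ ((∫⁻ x, f x ^ r ∂ν) ^ (1 / r) * ν univ ^ (1 - 1 / r)) ^ r :=
        ENNReal.rpow_le_rpow h hr0.le
    _ = ν univ ^ (r - 1) * ∫⁻ x, f x ^ r ∂ν := by
        rw [ENNReal.mul_rpow_of_nonneg _ _ hr0.le, ← ENNReal.rpow_mul, ← ENNReal.rpow_mul,
          one_div_mul_cancel hr0.ne', ENNReal.rpow_one, mul_comm]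
        congr 2
        field_simp

theorem lintegral_rpow_lintegral_mul_exp_neg_le (μ : Measure X) [SFinite μ] {a : X → ℝ}
    (ha : Measurable a) (ha0 : 0 ≤ a) {Γ : ℝ} (hΓ : 0 < Γ) {r : ℝ} (hr : 1 ≤ r) :
    ∫⁻ t in Ioi (0 : ℝ), (∫⁻ x, ENNReal.ofReal (a x * Real.exp (-Γ * t * a x)) ∂μ) ^ r
      ≤ ENNReal.ofReal (Γ * r)⁻¹ * (∫⁻ x, ENNReal.ofReal (a x ^ (1 - r⁻¹)) ∂μ) ^ r := by
  have hr0 : 0 < r := one_pos.trans_le hr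
  set w : X → ℝ≥0∞ := fun x => ENNReal.ofReal (a x ^ (1 - r⁻¹))
  set ν := μ.withDensity w
  set g : ℝ → X → ℝ≥0∞ := fun t x => ENNReal.ofReal (a x ^ r⁻¹ * Real.exp (-Γ * t * a x))
  have hw : Measurable w := by fun_prop
  have hg : Measurable (Function.uncurry fun t x => g t x ^ r) := by fun_prop
  have h_density (t : ℝ) : ∫⁻ x, ENNReal.ofReal (a x * Real.exp (-Γ * t * a x)) ∂μ
      = ∫⁻ x, g t x ∂ν := by
    rw [lintegral_withDensity_eq_lintegral_mul _ hw (by fun_prop)]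
    refine lintegral_congr fun x => ?_
    simp only [w, g, Pi.mul_apply, ← ENNReal.ofReal_mul (Real.rpow_nonneg (ha0 x) _), ← mul_assoc,
      ← Real.rpow_add' (ha0 x) (by norm_num : (1 - r⁻¹ + r⁻¹) ≠ 0), sub_add_cancel, Real.rpow_one]
  have h_pow (t : ℝ) (x : X) :
      g t x ^ r = ENNReal.ofReal (a x * Real.exp (-(Γ * r) * t * a x)) := by
    rw [ENNReal.ofReal_rpow_of_nonneg (mul_nonneg (Real.rpow_nonneg (ha0 x) _) (Real.exp_pos _).le)
        hr0.le,
      Real.mul_rpow (Real.rpow_nonneg (ha0 x) _) (Real.exp_pos _).le,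
      Real.rpow_inv_rpow (ha0 x) hr0.ne', ← Real.exp_mul]
    ring_nf
  have hν : ν univ = ∫⁻ x, w x ∂μ := by
    rw [withDensity_apply _ MeasurableSet.univ, Measure.restrict_univ]
  calc ∫⁻ t in Ioi (0 : ℝ), (∫⁻ x, ENNReal.ofReal (a x * Real.exp (-Γ * t * a x)) ∂μ) ^ r
      = ∫⁻ t in Ioi (0 : ℝ), (∫⁻ x, g t x ∂ν) ^ r := by simp only [h_density]
    _ ≤ ∫⁻ t in Ioi (0 : ℝ), ν univ ^ (r - 1) * ∫⁻ x, g t x ^ r ∂ν :=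
        lintegral_mono fun t => lintegral_rpow_le_measure_univ_rpow_mul (by fun_prop) hr
    _ = ν univ ^ (r - 1) * ∫⁻ x, (∫⁻ t in Ioi (0 : ℝ), g t x ^ r) ∂ν := by
        have hG : Measurable fun t => ∫⁻ x, g t x ^ r ∂ν := hg.lintegral_prod_right'
        rw [lintegral_const_mul _ hG, lintegral_lintegral_swap hg.aemeasurable]
    _ ≤ ν univ ^ (r - 1) * ∫⁻ x, ENNReal.ofReal (Γ * r)⁻¹ ∂ν := by
        gcongr with x
        simp only [h_pow]
        exact lintegral_Ioi_mul_exp_neg_mul_le (by positivity) (ha0 x)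
    _ = ENNReal.ofReal (Γ * r)⁻¹ * (∫⁻ x, w x ∂μ) ^ r := by
        rw [lintegral_const, ← hν, mul_left_comm]
        nth_rewrite 2 [← ENNReal.rpow_one (ν univ)]
        rw [← ENNReal.rpow_add_of_nonneg _ _ (sub_nonneg.2 hr) zero_le_one, sub_add_cancel]

theorem eLpNorm_integral_mul_exp_neg_le_lintegral (μ : Measure X) [SFinite μ] {a : X → ℝ}
    (ha : Measurable a) (ha0 : 0 ≤ a) {Γ : ℝ} (hΓ : 0 < Γ) {p : ℝ≥0∞} (hp : 1 ≤ p) :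
    eLpNorm (fun t : ℝ => ∫ x, a x * Real.exp (-Γ * t * a x) ∂μ) p (volume.restrict (Ioi 0))
      ≤ ENNReal.ofReal ((Γ * p.toReal) ^ (-1 / p.toReal)) *
          ∫⁻ x, ENNReal.ofReal (a x ^ (1 - p.toReal⁻¹)) ∂μ := by
  have h_enorm (t : ℝ) : ‖∫ x, a x * Real.exp (-Γ * t * a x) ∂μ‖ₑ
      ≤ ∫⁻ x, ENNReal.ofReal (a x * Real.exp (-Γ * t * a x)) ∂μ := by
    refine (enorm_integral_le_lintegral_enorm _).trans_eq (lintegral_congr fun x => ?_)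
    exact Real.enorm_of_nonneg (mul_nonneg (ha0 x) (Real.exp_pos _).le)
  rcases eq_or_ne p ∞ with rfl | hp_top
  · rw [eLpNorm_exponent_top]
    simp only [toReal_top, mul_zero, _root_.div_zero, Real.rpow_zero, ofReal_one, _root_.inv_zero,
      sub_zero, Real.rpow_one, one_mul]
    refine eLpNormEssSup_le_of_ae_enorm_bound ?_
    filter_upwards [ae_restrict_mem measurableSet_Ioi] with t ht
    refine (h_enorm t).trans (lintegral_mono fun x => ENNReal.ofReal_le_ofReal ?_)
    refine mul_le_of_le_one_right (ha0 x) (Real.exp_le_one_iff.2 ?_)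
    have := mul_nonneg (mul_nonneg hΓ.le (mem_Ioi.1 ht).le) (ha0 x)
    linarith
  have hr : 1 ≤ p.toReal := by simpa using ENNReal.toReal_mono hp_top hp
  have hr0 : 0 < p.toReal := one_pos.trans_le hr
  rw [eLpNorm_eq_lintegral_rpow_enorm_toReal (one_pos.trans_le hp).ne' hp_top]
  calc (∫⁻ t in Ioi (0 : ℝ), ‖∫ x, a x * Real.exp (-Γ * t * a x) ∂μ‖ₑ ^ p.toReal) ^ (1 / p.toReal)
      ≤ (ENNReal.ofReal (Γ * p.toReal)⁻¹ *
          (∫⁻ x, ENNReal.ofReal (a x ^ (1 - p.toReal⁻¹)) ∂μ) ^ p.toReal) ^ (1 / p.toReal) := by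
        gcongr ?_ ^ _
        refine (lintegral_mono fun t => ?_).trans
          (lintegral_rpow_lintegral_mul_exp_neg_le μ ha ha0 hΓ hr)
        gcongr
        exact h_enorm t
    _ = _ := by
        rw [ENNReal.mul_rpow_of_nonneg _ _ (by positivity), ← ENNReal.rpow_mul,
          mul_one_div_cancel hr0.ne', ENNReal.rpow_one,
          ENNReal.ofReal_rpow_of_nonneg (by positivity) (by positivity),
          Real.inv_rpow (by positivity), ← Real.rpow_neg (by positivity), neg_div]

theorem eLpNorm_integral_mul_exp_neg_le (μ : Measure X) [IsFiniteMeasure μ] {a : X → ℝ}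
    (ha : Measurable a) (ha0 : 0 ≤ a) (ha_int : Integrable a μ) {Γ : ℝ} (hΓ : 0 < Γ)
    {p : ℝ≥0∞} (hp : 1 ≤ p) :
    eLpNorm (fun t : ℝ => ∫ x, a x * Real.exp (-Γ * t * a x) ∂μ) p (volume.restrict (Ioi 0))
      ≤ ENNReal.ofReal ((Γ * p.toReal) ^ (-1 / p.toReal) *
          ∫ x, a x ^ (1 - p.toReal⁻¹) ∂μ) := by
  have hs : Integrable (fun x => a x ^ (1 - p.toReal⁻¹)) μ :=
    ha_int.rpow_of_le_one ha0 (sub_nonneg.2 (toReal_inv_le_one hp))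
      (sub_le_self _ (inv_nonneg.2 ENNReal.toReal_nonneg))
  rw [ENNReal.ofReal_mul (Real.rpow_nonneg (by positivity) _),
    ofReal_integral_eq_lintegral_ofReal hs (.of_forall fun x => Real.rpow_nonneg (ha0 x) _)]
  exact eLpNorm_integral_mul_exp_neg_le_lintegral μ ha ha0 hΓ hp

/-- For the bi-Laplacian semigroup T(t) = exp(−Γ₂tΔ²) on FM(ℝⁿ)
(Fourier symbol e^{−Γ₂t|ξ|⁴}) and 1 ≤ p ≤ ∞ one has
‖Δ²T(·)u₀‖_{L^p(ℝ₊, FM)} ≤ (Γ₂ p)^{−1/p} ‖u₀‖_{FM^{4−4/p}}.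
On the Fourier side u₀ is represented by the finite variation measure μ = |û₀|;
then ‖Δ²T(t)u₀‖_FM = ∫ |ξ|⁴ e^{−Γ₂t|ξ|⁴} d|û₀|(ξ) and
‖u₀‖_{FM^{4−4/p}} = ∫ |ξ|^{4−4/p} d|û₀|(ξ).  (For p = ∞, ENNReal.toReal gives
p.toReal = 0 and 1/p.toReal = 0, recovering the constant 1 and the exponent 4.) -/
theorem stmt7 {n : ℕ} (Γ₂ : ℝ) (hΓ₂ : 0 < Γ₂) (p : ℝ≥0∞) (hp : 1 ≤ p)
    (μ : Measure (EuclideanSpace ℝ (Fin n))) [IsFiniteMeasure μ]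
    (hμ : Integrable (fun ξ : EuclideanSpace ℝ (Fin n) => ‖ξ‖ ^ (4 : ℝ)) μ) :
    eLpNorm
        (fun t : ℝ => ∫ ξ, ‖ξ‖ ^ (4 : ℝ) * Real.exp (-Γ₂ * t * ‖ξ‖ ^ (4 : ℝ)) ∂μ)
        p (volume.restrict (Set.Ioi (0 : ℝ)))
      ≤ ENNReal.ofReal
          ((Γ₂ * p.toReal) ^ (-(1 : ℝ) / p.toReal) *
            ∫ ξ, ‖ξ‖ ^ ((4 : ℝ) - 4 / p.toReal) ∂μ) := by
  have h_exponent (ξ : EuclideanSpace ℝ (Fin n)) :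
      (‖ξ‖ ^ (4 : ℝ)) ^ (1 - p.toReal⁻¹) = ‖ξ‖ ^ ((4 : ℝ) - 4 / p.toReal) := by
    rw [← Real.rpow_mul (norm_nonneg ξ)]
    ring_nf
  simpa only [h_exponent] using
    eLpNorm_integral_mul_exp_neg_le μ (by fun_prop) (fun ξ => by positivity) hμ hΓ₂ hp
end

section
/- For Γ₂ > 0 and f ∈ L¹(ℝ₊, FM(ℝⁿ)), the convolution (Δ²T ⋆ f)(t) := Δ² ∫₀ᵗ exp(−Γ₂(t−s)Δ²) f(s) ds satisfies ‖Δ²T ⋆ f‖_{L¹(ℝ₊, FM(ℝⁿ))} ≤ Γ₂^{-1} ‖f‖_{L¹(ℝ₊, FM(ℝⁿ))}; i.e., the bilaplacian operator Γ₂Δ² has L¹ maximal regularity on FM(ℝⁿ). -/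
/-!
On the Fourier side the operator acts, frequency by frequency, as a causal convolution in time
with the kernel `c e^{-Γ₂ c t}`, `c = |ξ|⁴`. Its `L¹(ℝ₊)` norm is `Γ₂⁻¹` for `c > 0` (and `0` for
`c = 0`), uniformly in `ξ`, so the Minkowski inequality for the time integral followed by Tonelli
(swapping the outer time integral past `(s, ξ)`) gives the bound. Working in `ℝ≥0∞` avoids having
to prove that the convolution is integrable.
-/

open MeasureTheory Set Function Real
open scoped ENNReal

theorem lintegral_lintegral_mul_le_of_lintegral_le {T Q : Type*} [MeasurableSpace T]
    [MeasurableSpace Q] {ν : Measure T} {ρ : Measure Q} [SFinite ν] [SFinite ρ]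
    {k : T → Q → ℝ≥0∞} (hk : Measurable (uncurry k)) {F : Q → ℝ≥0∞} (hF : AEMeasurable F ρ)
    {C : ℝ≥0∞} (hC : ∀ q, ∫⁻ t, k t q ∂ν ≤ C) :
    ∫⁻ t, ∫⁻ q, k t q * F q ∂ρ ∂ν ≤ C * ∫⁻ q, F q ∂ρ :=
  calc ∫⁻ t, ∫⁻ q, k t q * F q ∂ρ ∂ν
      = ∫⁻ q, (∫⁻ t, k t q ∂ν) * F q ∂ρ := by
        rw [lintegral_lintegral_swap (hk.aemeasurable.mul hF.comp_snd)]
        exact lintegral_congr fun q => lintegral_mul_const _ hk.of_uncurry_right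
    _ ≤ ∫⁻ q, C * F q ∂ρ := lintegral_mono fun q => mul_le_mul_left (hC q) _
    _ = C * ∫⁻ q, F q ∂ρ := lintegral_const_mul'' C hF

theorem ofReal_integral_le_lintegral_ofReal {α : Type*} [MeasurableSpace α] {μ : Measure α}
    {f : α → ℝ} (hf : 0 ≤ f) :
    ENNReal.ofReal (∫ x, f x ∂μ) ≤ ∫⁻ x, ENNReal.ofReal (f x) ∂μ := by
  simpa [Real.enorm_eq_ofReal (integral_nonneg hf), Real.enorm_eq_ofReal (hf _)] using
    enorm_integral_le_lintegral_enorm (μ := μ) f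

theorem lintegral_Ioi_ofReal_mul_exp_neg_mul_sub {Γ c : ℝ} (hΓ : 0 < Γ) (hc : 0 < c) (s : ℝ) :
    ∫⁻ t in Ioi s, ENNReal.ofReal (c * exp (-Γ * (t - s) * c)) = ENNReal.ofReal Γ⁻¹ := by
  have ha : -(Γ * c) < 0 := neg_lt_zero.mpr (mul_pos hΓ hc)
  have hexp : (fun t => c * exp (-Γ * (t - s) * c))
      = fun t => c * exp (Γ * c * s) * exp (-(Γ * c) * t) := by
    funext t
    rw [mul_assoc c, ← exp_add]
    ring_nf
  have hint : IntegrableOn (fun t => c * exp (-Γ * (t - s) * c)) (Ioi s) := by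
    rw [hexp]
    exact (integrableOn_exp_mul_Ioi ha s).const_mul _
  rw [← ofReal_integral_eq_lintegral_ofReal hint (ae_of_all _ fun t => by positivity), hexp,
    integral_const_mul, integral_exp_mul_Ioi ha, neg_div_neg_eq, mul_div_assoc', mul_assoc c,
    ← exp_add]
  field_simp
  simp

theorem lintegral_Ici_indicator_mul_exp_le {Γ c : ℝ} (hΓ : 0 < Γ) (hc : 0 ≤ c) (s : ℝ) :
    ∫⁻ t, (Ici s).indicator (fun t => ENNReal.ofReal (c * exp (-Γ * (t - s) * c))) t
      ≤ ENNReal.ofReal Γ⁻¹ := by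
  rcases hc.eq_or_lt with rfl | hc
  · simp
  rw [lintegral_indicator measurableSet_Ici, setLIntegral_congr Ioi_ae_eq_Ici.symm,
    lintegral_Ioi_ofReal_mul_exp_neg_mul_sub hΓ hc s]

noncomputable def causalKernel {X : Type*} (K : ℝ → ℝ → X → ℝ) (t : ℝ) (q : ℝ × X) : ℝ≥0∞ :=
  (Ici q.1).indicator (fun t => ENNReal.ofReal (K t q.1 q.2)) t

section causalKernel

variable {X : Type*} [MeasurableSpace X] {K : ℝ → ℝ → X → ℝ}

theorem measurable_causalKernel (hK : Measurable fun p : ℝ × ℝ × X => K p.1 p.2.1 p.2.2) :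
    Measurable (uncurry (causalKernel K)) :=
  (ENNReal.measurable_ofReal.comp hK).indicator
    (measurableSet_le measurable_snd.fst measurable_fst)

theorem ofReal_integral_norm_setIntegral_Ioc_le {E : Type*} [NormedAddCommGroup E]
    [NormedSpace ℝ E] {μ : Measure X} [SFinite μ] (hK0 : ∀ t s ξ, 0 ≤ K t s ξ)
    (hK : Measurable fun p : ℝ × ℝ × X => K p.1 p.2.1 p.2.2) {g : ℝ → X → E}
    (hg : AEStronglyMeasurable (fun q : ℝ × X => g q.1 q.2)
      (((volume : Measure ℝ).restrict (Ioi 0)).prod μ)) (t : ℝ) :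
    ENNReal.ofReal (∫ ξ, ‖∫ s in Ioc 0 t, K t s ξ • g s ξ‖ ∂μ)
      ≤ ∫⁻ q, causalKernel K t q * ‖g q.1 q.2‖ₑ
          ∂(((volume : Measure ℝ).restrict (Ioi 0)).prod μ) :=
  calc _ ≤ ∫⁻ ξ, ‖∫ s in Ioc 0 t, K t s ξ • g s ξ‖ₑ ∂μ := by
        simpa only [ofReal_norm] using ofReal_integral_le_lintegral_ofReal (μ := μ)
          (fun ξ => norm_nonneg (∫ s in Ioc 0 t, K t s ξ • g s ξ))
    _ ≤ ∫⁻ ξ, (∫⁻ s in Ioc 0 t, ‖K t s ξ • g s ξ‖ₑ) ∂μ :=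
        lintegral_mono fun ξ => enorm_integral_le_lintegral_enorm _
    _ = ∫⁻ ξ, (∫⁻ s in Ioi 0, causalKernel K t (s, ξ) * ‖g s ξ‖ₑ) ∂μ := by
        refine lintegral_congr fun ξ => ?_
        rw [← Iic_inter_Ioi, ← Measure.restrict_restrict measurableSet_Iic,
          ← lintegral_indicator measurableSet_Iic]
        refine lintegral_congr fun s => ?_
        by_cases hst : s ≤ t
        · simp [causalKernel, hst, enorm_smul, Real.enorm_eq_ofReal (hK0 t s ξ)]
        · simp [causalKernel, hst]
    _ = _ := (lintegral_prod_symm _ (((measurable_causalKernel hK).comp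
          measurable_prodMk_left).aemeasurable.mul hg.enorm)).symm

end causalKernel

/-- L¹ maximal regularity of Γ₂Δ² on FM(ℝⁿ):
‖Δ²T ⋆ f‖_{L¹(ℝ₊,FM)} ≤ Γ₂^{-1} ‖f‖_{L¹(ℝ₊,FM)}.
On the Fourier side f(s) is represented by the density g(s,·) against a fixed finite
variation measure μ; then (Δ²T ⋆ f)(t) has Fourier density
ξ ↦ ∫₀ᵗ |ξ|⁴ e^{−Γ₂(t−s)|ξ|⁴} g(s,ξ) ds, and the FM-norms are the μ-integrals of the
pointwise norms. -/
theorem stmt8 {n : ℕ} (Γ₂ : ℝ) (hΓ₂ : 0 < Γ₂)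
    (μ : Measure (EuclideanSpace ℝ (Fin n))) [IsFiniteMeasure μ]
    (g : ℝ → EuclideanSpace ℝ (Fin n) → ℂ)
    (hg : Integrable (fun q : ℝ × EuclideanSpace ℝ (Fin n) => g q.1 q.2)
      (((volume : Measure ℝ).restrict (Set.Ioi 0)).prod μ)) :
    ∫ t in Set.Ioi (0 : ℝ),
        ∫ ξ, ‖∫ s in Set.Ioc (0 : ℝ) t,
            (‖ξ‖ ^ (4 : ℝ) * Real.exp (-Γ₂ * (t - s) * ‖ξ‖ ^ (4 : ℝ))) • g s ξ‖ ∂μ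
      ≤ Γ₂⁻¹ * ∫ t in Set.Ioi (0 : ℝ), ∫ ξ, ‖g t ξ‖ ∂μ := by
  set K : ℝ → ℝ → EuclideanSpace ℝ (Fin n) → ℝ :=
    fun t s ξ => ‖ξ‖ ^ (4 : ℝ) * exp (-Γ₂ * (t - s) * ‖ξ‖ ^ (4 : ℝ))
  have hK : Measurable fun p : ℝ × ℝ × EuclideanSpace ℝ (Fin n) => K p.1 p.2.1 p.2.2 := by
    fun_prop
  have hkernel : ∀ q, ∫⁻ t in Ioi 0, causalKernel K t q ≤ ENNReal.ofReal Γ₂⁻¹ := fun q =>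
    (lintegral_mono' Measure.restrict_le_self le_rfl).trans
      (lintegral_Ici_indicator_mul_exp_le hΓ₂ (by positivity) q.1)
  have hnorm : ∫⁻ q, ‖g q.1 q.2‖ₑ ∂(((volume : Measure ℝ).restrict (Ioi 0)).prod μ)
      = ENNReal.ofReal (∫ t in Ioi 0, ∫ ξ, ‖g t ξ‖ ∂μ) := by
    rw [integral_integral hg.norm, ofReal_integral_norm_eq_lintegral_enorm hg]
  rw [← ENNReal.ofReal_le_ofReal_iff (mul_nonneg (inv_nonneg.2 hΓ₂.le)
    (integral_nonneg fun t => integral_nonneg fun ξ => norm_nonneg _)),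
    ENNReal.ofReal_mul (inv_nonneg.2 hΓ₂.le), ← hnorm]
  calc _ ≤ ∫⁻ t in Ioi 0, ENNReal.ofReal
        (∫ ξ, ‖∫ s in Ioc 0 t, K t s ξ • g s ξ‖ ∂μ) :=
        ofReal_integral_le_lintegral_ofReal fun t => integral_nonneg fun ξ => norm_nonneg _
    _ ≤ _ := lintegral_mono fun t => ofReal_integral_norm_setIntegral_Ioc_le
        (fun _ _ _ => by positivity) hK hg.aestronglyMeasurable t
    _ ≤ _ := lintegral_lintegral_mul_le_of_lintegral_le (measurable_causalKernel hK)
        hg.aestronglyMeasurable.enorm hkernel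
end

section
/- Let V ∈ ℝⁿ with |V| = √(−α/β) (α < 0 < β), Γ₂ > 0, Γ₀ < 0, λ₀ ∈ ℝ, and let σ_{A₀}(ξ) = Γ₂|ξ|⁴ + Γ₀|ξ|² + iλ₀(V·ξ) + 2β σ_P(ξ)VVᵀ, where σ_P(ξ) = I − ξξᵀ/|ξ|². Then there exist ξ ≠ 0 and a unit vector x, both orthogonal to V, such that Re(xᵀ σ_{A₀}(ξ) x) = Γ₂|ξ|⁴ + Γ₀|ξ|² < 0; in particular the symbol has an eigenvalue with negative real part, so the ordered polar state is linearly exponentially unstable. -/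
/-!
Choose a unit vector `x ⊥ V` (possible as `n ≥ 2`) and `ξ = t • x`. Then `ξ ⊥ V`, the
Helmholtz term `⟨V, x⟩ ⟨x, σ_P(ξ) V⟩` vanishes, and `Γ₂ t⁴ + Γ₀ t² < 0` as soon as
`0 < t² < -Γ₀ / Γ₂`.
-/

open Module

theorem exists_norm_eq_one_inner_eq_zero {𝕜 E : Type*} [RCLike 𝕜] [NormedAddCommGroup E]
    [InnerProductSpace 𝕜 E] (hE : 2 ≤ finrank 𝕜 E) (v : E) :
    ∃ x : E, ‖x‖ = 1 ∧ inner 𝕜 x v = 0 := by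
  have hspan : (𝕜 ∙ v) ≠ ⊤ := fun h => by
    have : finrank 𝕜 (𝕜 ∙ v) ≤ 1 := (finrank_span_le_card ({v} : Set E)).trans (by simp)
    rw [h, finrank_top] at this
    omega
  obtain ⟨y, hy, hy0⟩ :=
    Submodule.exists_mem_ne_zero_of_ne_bot (mt Submodule.orthogonal_eq_bot_iff.mp hspan)
  refine ⟨(‖y‖ : 𝕜)⁻¹ • y, norm_smul_inv_norm hy0, ?_⟩
  rw [inner_smul_left, Submodule.mem_orthogonal_singleton_iff_inner_left.mp hy, mul_zero]

theorem exists_pos_mul_pow_four_add_mul_sq_neg {a b : ℝ} (ha : 0 < a) (hb : b < 0) :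
    ∃ t : ℝ, 0 < t ∧ a * t ^ 4 + b * t ^ 2 < 0 := by
  have hs : 0 < -b / (2 * a) := div_pos (by linarith) (by linarith)
  refine ⟨√(-b / (2 * a)), Real.sqrt_pos.mpr hs, ?_⟩
  have ht : √(-b / (2 * a)) ^ 2 = -b / (2 * a) := Real.sq_sqrt hs.le
  have : a * √(-b / (2 * a)) ^ 4 + b * √(-b / (2 * a)) ^ 2 = b * (-b / (4 * a)) := by
    rw [show 4 = 2 * 2 from rfl, pow_mul, ht]; field_simp; ring
  rw [this]
  exact mul_neg_of_neg_of_pos hb (div_pos (by linarith) (by linarith))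

theorem stmt13_general {n : ℕ} (hn : 2 ≤ n) (β Γ₀ Γ₂ lam₀ : ℝ)
    (hΓ₂ : 0 < Γ₂) (hΓ₀ : Γ₀ < 0)
    (V : EuclideanSpace ℝ (Fin n)) :
    ∃ ξ x : EuclideanSpace ℝ (Fin n), ξ ≠ 0 ∧ ‖x‖ = 1 ∧
      (inner ℝ ξ V : ℝ) = 0 ∧ (inner ℝ x V : ℝ) = 0 ∧
      lam₀ * (inner ℝ V ξ : ℝ) = 0 ∧
      (Γ₂ * ‖ξ‖ ^ 4 + Γ₀ * ‖ξ‖ ^ 2) * ‖x‖ ^ 2 +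
          2 * β * (inner ℝ V x : ℝ) *
            (inner ℝ x (V - (((inner ℝ ξ V : ℝ)) / ‖ξ‖ ^ 2) • ξ) : ℝ)
        = Γ₂ * ‖ξ‖ ^ 4 + Γ₀ * ‖ξ‖ ^ 2 ∧
      Γ₂ * ‖ξ‖ ^ 4 + Γ₀ * ‖ξ‖ ^ 2 < 0 := by
  obtain ⟨x, hx, hxV⟩ := exists_norm_eq_one_inner_eq_zero (𝕜 := ℝ) (by simpa using hn) V
  obtain ⟨t, ht, hneg⟩ := exists_pos_mul_pow_four_add_mul_sq_neg hΓ₂ hΓ₀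
  have hx0 : x ≠ 0 := norm_ne_zero_iff.mp (hx ▸ one_ne_zero)
  have hξ : ‖t • x‖ = t := by rw [norm_smul, hx, mul_one, Real.norm_of_nonneg ht.le]
  have hξV : inner ℝ (t • x) V = (0 : ℝ) := by rw [real_inner_smul_left, hxV, mul_zero]
  refine ⟨t • x, x, smul_ne_zero ht.ne' hx0, hx, hξV, hxV,
    by rw [real_inner_comm, hξV, mul_zero], ?_, by rwa [hξ]⟩
  rw [real_inner_comm, hxV, hx]
  ring

/-- Linear instability of the ordered polar state for Γ₀ < 0:
with |V| = √(−α/β) (α < 0 < β), Γ₂ > 0, Γ₀ < 0 and n ≥ 2, there exist ξ ≠ 0 and a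
unit vector x, both orthogonal to V, such that the real part of the quadratic form
xᵀσ_{A₀}(ξ)x — namely Γ₂|ξ|⁴‖x‖² + Γ₀|ξ|²‖x‖² + 2β xᵀ(σ_P(ξ)VVᵀ)x, the imaginary
part ilam₀(V·ξ) vanishing since V·ξ = 0 — equals Γ₂|ξ|⁴ + Γ₀|ξ|² < 0.
Here σ_P(ξ)w = w − (⟨ξ,w⟩/|ξ|²)ξ, so xᵀ(σ_P(ξ)VVᵀ)x = ⟨V,x⟩⟨x, V − (⟨ξ,V⟩/|ξ|²)ξ⟩. -/
theorem stmt13 {n : ℕ} (hn : 2 ≤ n) (α β Γ₀ Γ₂ lam₀ : ℝ)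
    (hα : α < 0) (hβ : 0 < β) (hΓ₂ : 0 < Γ₂) (hΓ₀ : Γ₀ < 0)
    (V : EuclideanSpace ℝ (Fin n)) (hV : ‖V‖ = Real.sqrt (-α / β)) :
    ∃ ξ x : EuclideanSpace ℝ (Fin n), ξ ≠ 0 ∧ ‖x‖ = 1 ∧
      (inner ℝ ξ V : ℝ) = 0 ∧ (inner ℝ x V : ℝ) = 0 ∧
      lam₀ * (inner ℝ V ξ : ℝ) = 0 ∧
      (Γ₂ * ‖ξ‖ ^ 4 + Γ₀ * ‖ξ‖ ^ 2) * ‖x‖ ^ 2 +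
          2 * β * (inner ℝ V x : ℝ) *
            (inner ℝ x (V - (((inner ℝ ξ V : ℝ)) / ‖ξ‖ ^ 2) • ξ) : ℝ)
        = Γ₂ * ‖ξ‖ ^ 4 + Γ₀ * ‖ξ‖ ^ 2 ∧
      Γ₂ * ‖ξ‖ ^ 4 + Γ₀ * ‖ξ‖ ^ 2 < 0 :=
  stmt13_general hn β Γ₀ Γ₂ lam₀ hΓ₂ hΓ₀ V
end

section
/- Let Γ₂ > 0, Γ₀, λ₀ ∈ ℝ, V ∈ ℝⁿ, M ∈ ℝ^{n×n} symmetric, and σ_{A_LF}(ξ) = Γ₂|ξ|⁴ + Γ₀|ξ|² + σ_P(ξ)M + iλ₀ V·ξ. Then there exist ω > 0, φ₀ ∈ (0, π/2) and δ > 0 such that for all ξ ∈ ℝⁿ∖{0}, every eigenvalue λ of ω + σ_{A_LF}(ξ) satisfies |arg λ| ≤ φ₀ and |λ| ≥ δ (i.e. the shifted symbol takes values in a closed sector of angle less than π/2, bounded away from 0). -/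
open Matrix

/-- The Helmholtz projection symbol σ_P(ξ) = I − ξξᵀ/|ξ|² as a complex n×n matrix. -/
noncomputable def sigmaP {n : ℕ} (ξ : EuclideanSpace ℝ (Fin n)) :
    Matrix (Fin n) (Fin n) ℂ :=
  Matrix.of fun i j => (((if i = j then 1 else 0) - ξ i * ξ j / ‖ξ‖ ^ 2 : ℝ) : ℂ)

/-!
The entries of σ_P(ξ) are bounded by 2 independently of ξ, so the ℓ∞-operator norm of
σ_P(ξ)M is bounded by a constant K. An eigenvalue λ of the shifted symbol, which is a scalar
c(ξ) plus σ_P(ξ)M, therefore lies within K of c(ξ). For ω large enough the quartic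
Γ₂|ξ|⁴ + Γ₀|ξ|² + ω dominates 1 + |ξ| + K, so Re λ ≥ 1 + |ξ|, while the imaginary part of
c(ξ) grows only linearly in |ξ|: λ lies in a fixed sector of half-angle < π/2 outside the
unit disc.
-/

attribute [local instance] Matrix.linftyOpSeminormedAddCommGroup Matrix.linftyOpNormedRing

theorem Matrix.norm_sub_le_linfty_opNorm_of_mulVec_eq_smul {m 𝕜 : Type*} [Fintype m]
    [DecidableEq m] [NormedField 𝕜] {A : Matrix m m 𝕜} {c μ : 𝕜} {v : m → 𝕜} (hv : v ≠ 0)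
    (h : (c • (1 : Matrix m m 𝕜) + A) *ᵥ v = μ • v) : ‖μ - c‖ ≤ ‖A‖ := by
  have hA : A *ᵥ v = (μ - c) • v := by
    rw [add_mulVec, smul_mulVec, one_mulVec] at h
    rw [sub_smul, ← h, add_sub_cancel_left]
  refine le_of_mul_le_mul_right ?_ (norm_pos_iff.2 hv)
  rw [← norm_smul, ← hA]
  exact linfty_opNorm_mulVec A v

theorem Matrix.linfty_opNorm_le_card_mul_of_norm_apply_le {m n α : Type*} [Fintype m]
    [Fintype n] [SeminormedAddCommGroup α] {A : Matrix m n α} {C : ℝ} (hC : 0 ≤ C)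
    (h : ∀ i j, ‖A i j‖ ≤ C) : ‖A‖ ≤ Fintype.card n * C := by
  lift C to NNReal using hC
  rw [← NNReal.coe_natCast, ← NNReal.coe_mul, ← coe_nnnorm, NNReal.coe_le_coe,
    linfty_opNNNorm_def, Finset.sup_le_iff]
  intro i _
  rw [← nsmul_eq_mul]
  exact Finset.sum_le_card_nsmul _ _ _ fun j _ => h i j

theorem Complex.abs_arg_le_arctan_of_abs_im_le {z : ℂ} {C : ℝ} (hre : 0 < z.re)
    (him : |z.im| ≤ C * z.re) : |z.arg| ≤ Real.arctan C := by
  have hratio : |z.im / z.re| ≤ C := by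
    rwa [abs_div, abs_of_pos hre, div_le_iff₀ hre]
  have harg : z.arg = Real.arctan (z.im / z.re) := by
    obtain ⟨hlo, hhi⟩ := abs_lt.1 (Complex.abs_arg_lt_pi_div_two_iff.2 (Or.inl hre))
    rw [← Complex.tan_arg, Real.arctan_tan hlo hhi]
  rw [harg, abs_le, ← Real.arctan_neg]
  exact ⟨Real.arctan_mono (abs_le.1 hratio).1, Real.arctan_mono (abs_le.1 hratio).2⟩

theorem Complex.one_le_norm_and_abs_arg_le_of_norm_sub_le {z c : ℂ} {K a t : ℝ}
    (hz : ‖z - c‖ ≤ K) (hre : 1 + t + K ≤ c.re) (him : |c.im| ≤ a * t) (ha : 0 ≤ a)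
    (ht : 0 ≤ t) : 1 ≤ ‖z‖ ∧ |z.arg| ≤ Real.arctan (a + K + 1) := by
  have hzre : 1 + t ≤ z.re := by
    have := (abs_le.1 ((abs_re_le_norm _).trans hz)).1
    rw [sub_re] at this
    linarith
  have hzim : |z.im| ≤ a * t + K := by
    have := (abs_sub_abs_le_abs_sub z.im c.im).trans ((sub_im z c ▸ abs_im_le_norm _).trans hz)
    linarith
  have hK : 0 ≤ K := (norm_nonneg _).trans hz
  refine ⟨by linarith [re_le_norm z], abs_arg_le_arctan_of_abs_im_le (by linarith) ?_⟩
  nlinarith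

theorem exists_pos_add_linear_le_quartic (Γ₂ Γ₀ K : ℝ) (hΓ₂ : 0 < Γ₂) :
    ∃ ω > (0 : ℝ), ∀ t : ℝ, 1 + t + K ≤ ω + (Γ₂ * t ^ 4 + Γ₀ * t ^ 2) := by
  refine ⟨|K| + 2 + (Γ₀ - 1) ^ 2 / (4 * Γ₂), by positivity, fun t => ?_⟩
  have hsq : 0 ≤ Γ₂ * t ^ 4 + (Γ₀ - 1) * t ^ 2 + (Γ₀ - 1) ^ 2 / (4 * Γ₂) := by
    have : Γ₂ * t ^ 4 + (Γ₀ - 1) * t ^ 2 + (Γ₀ - 1) ^ 2 / (4 * Γ₂) =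
        (2 * Γ₂ * t ^ 2 + (Γ₀ - 1)) ^ 2 / (4 * Γ₂) := by
      field_simp
      ring
    rw [this]
    positivity
  nlinarith [le_abs_self K, sq_nonneg (t - 1)]

theorem norm_sigmaP_apply_le {n : ℕ} (ξ : EuclideanSpace ℝ (Fin n)) (i j : Fin n) :
    ‖sigmaP ξ i j‖ ≤ 2 := by
  have hquot : |ξ i * ξ j / ‖ξ‖ ^ 2| ≤ 1 := by
    rw [abs_div, abs_mul, abs_of_nonneg (sq_nonneg ‖ξ‖), sq, ← Real.norm_eq_abs,
      ← Real.norm_eq_abs]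
    exact div_le_one_of_le₀ (mul_le_mul (PiLp.norm_apply_le ξ i) (PiLp.norm_apply_le ξ j)
      (norm_nonneg _) (norm_nonneg _)) (by positivity)
  have hδ : |(if i = j then (1 : ℝ) else 0)| ≤ 1 := by split_ifs <;> norm_num
  rw [sigmaP, of_apply, Complex.norm_real, Real.norm_eq_abs]
  linarith [abs_sub (if i = j then (1 : ℝ) else 0) (ξ i * ξ j / ‖ξ‖ ^ 2)]

theorem linfty_opNorm_sigmaP_le {n : ℕ} (ξ : EuclideanSpace ℝ (Fin n)) :
    ‖sigmaP ξ‖ ≤ n * 2 := by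
  simpa using linfty_opNorm_le_card_mul_of_norm_apply_le zero_le_two (norm_sigmaP_apply_le ξ)

theorem stmt16_general {n : ℕ} (Γ₂ Γ₀ lam₀ : ℝ) (hΓ₂ : 0 < Γ₂)
    (V : EuclideanSpace ℝ (Fin n))
    (M : Matrix (Fin n) (Fin n) ℝ) :
    ∃ ω > (0 : ℝ), ∃ φ₀ ∈ Set.Ioo (0 : ℝ) (Real.pi / 2), ∃ δ > (0 : ℝ),
      ∀ ξ : EuclideanSpace ℝ (Fin n), ξ ≠ 0 →
        ∀ (lam : ℂ) (v : Fin n → ℂ), v ≠ 0 →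
          Matrix.mulVec
              ((((ω : ℂ) + ((Γ₂ * ‖ξ‖ ^ 4 + Γ₀ * ‖ξ‖ ^ 2 : ℝ) : ℂ) +
                  Complex.I * ((lam₀ * (inner ℝ V ξ : ℝ) : ℝ) : ℂ)) •
                  (1 : Matrix (Fin n) (Fin n) ℂ)) +
                sigmaP ξ * M.map (fun a => (a : ℂ))) v = lam • v →
          δ ≤ ‖lam‖ ∧ |lam.arg| ≤ φ₀ := by
  set K := n * 2 * ‖M.map (fun a => (a : ℂ))‖
  obtain ⟨ω, hω, hshift⟩ := exists_pos_add_linear_le_quartic Γ₂ Γ₀ K hΓ₂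
  have hC : 0 < |lam₀| * ‖V‖ + K + 1 := by positivity
  refine ⟨ω, hω, _, ⟨Real.arctan_pos.2 hC, Real.arctan_lt_pi_div_two _⟩, 1, one_pos,
    fun ξ _ lam v hv h => ?_⟩
  have hdist := (norm_sub_le_linfty_opNorm_of_mulVec_eq_smul hv h).trans <|
    (linfty_opNorm_mul _ _).trans <|
      mul_le_mul_of_nonneg_right (linfty_opNorm_sigmaP_le ξ) (norm_nonneg _)
  refine Complex.one_le_norm_and_abs_arg_le_of_norm_sub_le hdist ?_ ?_ (by positivity)
    (norm_nonneg ξ)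
  · simpa [← Complex.ofReal_pow] using hshift ‖ξ‖
  · simpa [← Complex.ofReal_pow, abs_mul, mul_assoc] using
      mul_le_mul_of_nonneg_left (abs_real_inner_le_norm V ξ) (abs_nonneg lam₀)

/-- Sectoriality of the shifted symbol
σ_{A_LF}(ξ) = Γ₂|ξ|⁴ + Γ₀|ξ|² + σ_P(ξ)M + iλ₀V·ξ (Γ₂ > 0, M symmetric):
there are ω > 0, φ₀ ∈ (0, π/2) and δ > 0 such that for every ξ ≠ 0 each eigenvalue λ
of ω + σ_{A_LF}(ξ) satisfies |arg λ| ≤ φ₀ and |λ| ≥ δ, i.e. the shifted symbol takes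
its spectrum in a closed subsector of angle < π/2, bounded away from 0. -/
theorem stmt16 {n : ℕ} (Γ₂ Γ₀ lam₀ : ℝ) (hΓ₂ : 0 < Γ₂)
    (V : EuclideanSpace ℝ (Fin n))
    (M : Matrix (Fin n) (Fin n) ℝ) (hM : M.IsSymm) :
    ∃ ω > (0 : ℝ), ∃ φ₀ ∈ Set.Ioo (0 : ℝ) (Real.pi / 2), ∃ δ > (0 : ℝ),
      ∀ ξ : EuclideanSpace ℝ (Fin n), ξ ≠ 0 →
        ∀ (lam : ℂ) (v : Fin n → ℂ), v ≠ 0 →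
          Matrix.mulVec
              ((((ω : ℂ) + ((Γ₂ * ‖ξ‖ ^ 4 + Γ₀ * ‖ξ‖ ^ 2 : ℝ) : ℂ) +
                  Complex.I * ((lam₀ * (inner ℝ V ξ : ℝ) : ℝ) : ℂ)) •
                  (1 : Matrix (Fin n) (Fin n) ℂ)) +
                sigmaP ξ * M.map (fun a => (a : ℂ))) v = lam • v →
          δ ≤ ‖lam‖ ∧ |lam.arg| ≤ φ₀ :=
  stmt16_general Γ₂ Γ₀ lam₀ hΓ₂ V M
end
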